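/- Let W be a finite S_n-invariant subset of positive-integer words of length n. Then the total number of inversions over W equals C(n,2) times the number of words in W whose first entry exceeds the second entry, and the total number of descents over W equals (n-1) times the number of words in W whose first entry exceeds the second entry. -/

import Mathlib

/-!
Double counting over pairs of positions: a pair `(i, j)` with `i ≠ j` contributes the number of
words `w ∈ W` with `w j < w i`. A permutation of positions sending `(0, 1)` to `(i, j)` maps `W`
onto itself, so every such pair contributes the number of words with a descent at the first
position. It remains to count the `C(n, 2)` pairs `i < j` and the `n - 1` pairs `(i, i + 1)`.
-/

/-- The number of inversions of a word: pairs `(i,j)` with `i < j` and `w i > w j`. -/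
def invCount (n : ℕ) (w : Fin n → ℕ) : ℕ :=
  (Finset.univ.filter (fun p : Fin n × Fin n => p.1 < p.2 ∧ w p.2 < w p.1)).card

/-- The number of descents of a word: indices `i ∈ [n-1]` with `w i > w (i+1)`. -/
def desCount (n : ℕ) (w : Fin n → ℕ) : ℕ :=
  (Finset.univ.filter
    (fun p : Fin n × Fin n => (p.1 : ℕ) + 1 = (p.2 : ℕ) ∧ w p.2 < w p.1)).card

open Finset

theorem Equiv.Perm.exists_apply_eq_and_apply_eq {ι : Type*} [DecidableEq ι] {i j i' j' : ι}
    (hij : i ≠ j) (hij' : i' ≠ j') : ∃ σ : Equiv.Perm ι, σ i = i' ∧ σ j = j' := by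
  set τ := Equiv.swap i i'
  have hτj : τ j ≠ i' := by
    rw [← Equiv.swap_apply_left i i']
    exact τ.injective.ne hij.symm
  refine ⟨Equiv.swap (τ j) j' * τ, ?_, by simp⟩
  simp [τ, Equiv.swap_apply_of_ne_of_ne hτj.symm hij']

lemma Fin.card_filter_val_add_one_eq (n : ℕ) :
    #{p : Fin n × Fin n | (p.1 : ℕ) + 1 = p.2} = n - 1 := by
  cases n with
  | zero => simp
  | succ m =>
    have hsucc : ({p : Fin (m + 1) × Fin (m + 1) | (p.1 : ℕ) + 1 = p.2} : Finset _) =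
        univ.map ⟨fun i : Fin m => (i.castSucc, i.succ),
          Function.Injective.of_comp (f := Prod.fst) (Fin.castSucc_injective m)⟩ := by
      ext ⟨a, b⟩
      simp only [mem_filter, mem_univ, true_and, mem_map, Function.Embedding.coeFn_mk,
        Prod.ext_iff]
      constructor
      · intro h
        exact ⟨⟨a, by omega⟩, Fin.ext rfl, Fin.ext (by simp [h])⟩
      · rintro ⟨i, rfl, rfl⟩
        simp
    simp [hsucc]

section PermInvariant

variable {ι α : Type*} {W : Finset (ι → α)}

lemma card_filter_comp_perm (hW : ∀ w ∈ W, ∀ σ : Equiv.Perm ι, w ∘ σ ∈ W)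
    (σ : Equiv.Perm ι) (P : (ι → α) → Prop) [DecidablePred P] :
    #{w ∈ W | P (w ∘ σ)} = #{w ∈ W | P w} := by
  refine card_nbij' (· ∘ σ) (· ∘ σ.symm) ?_ ?_ ?_ ?_
  · intro w hw
    simp only [mem_coe, mem_filter] at hw ⊢
    exact ⟨hW w hw.1 σ, hw.2⟩
  · intro w hw
    simp only [mem_coe, mem_filter] at hw ⊢
    exact ⟨hW w hw.1 σ.symm, by simpa [Function.comp_assoc] using hw.2⟩
  · intro w _
    simp [Function.comp_assoc]
  · intro w _
    simp [Function.comp_assoc]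

variable [DecidableEq ι] [LinearOrder α]

lemma card_filter_apply_lt_apply_eq (hW : ∀ w ∈ W, ∀ σ : Equiv.Perm ι, w ∘ σ ∈ W)
    {i j k l : ι} (hij : i ≠ j) (hkl : k ≠ l) :
    #{w ∈ W | w j < w i} = #{w ∈ W | w l < w k} := by
  obtain ⟨σ, hσi, hσj⟩ := Equiv.Perm.exists_apply_eq_and_apply_eq hij hkl
  rw [← card_filter_comp_perm hW σ]
  simp [hσi, hσj]

lemma sum_card_filter_apply_lt_eq (hW : ∀ w ∈ W, ∀ σ : Equiv.Perm ι, w ∘ σ ∈ W)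
    (P : Finset (ι × ι)) (hP : ∀ p ∈ P, p.1 ≠ p.2) {i j : ι} (hij : i ≠ j) :
    ∑ w ∈ W, #{p ∈ P | w p.2 < w p.1} = #P * #{w ∈ W | w j < w i} :=
  calc ∑ w ∈ W, #{p ∈ P | w p.2 < w p.1} = ∑ p ∈ P, #{w ∈ W | w p.2 < w p.1} :=
        sum_card_bipartiteAbove_eq_sum_card_bipartiteBelow _
    _ = ∑ _p ∈ P, #{w ∈ W | w j < w i} :=
        sum_congr rfl fun p hp => card_filter_apply_lt_apply_eq hW (hP p hp) hij
    _ = #P * #{w ∈ W | w j < w i} := by rw [sum_const, smul_eq_mul]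

end PermInvariant

/-- If `W` is a finite `S_n`-invariant set of words of positive integers, then the
total number of inversions over `W` is `C(n,2)` times the number of words in `W`
whose first entry exceeds the second, and the total number of descents over `W` is
`(n-1)` times that number. -/
theorem sum_inv_and_sum_des_via_first_descent (n : ℕ) (hn : 2 ≤ n)
    (W : Finset (Fin n → ℕ))
    (hinvW : ∀ w ∈ W, ∀ σ : Equiv.Perm (Fin n), (w ∘ σ) ∈ W) :
    (∑ w ∈ W, invCount n w =
      Nat.choose n 2 *
        (W.filter (fun w => w ⟨1, by omega⟩ < w ⟨0, by omega⟩)).card) ∧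
    (∑ w ∈ W, desCount n w =
      (n - 1) *
        (W.filter (fun w => w ⟨1, by omega⟩ < w ⟨0, by omega⟩)).card) := by
  have h01 : (⟨0, by omega⟩ : Fin n) ≠ ⟨1, by omega⟩ := by simp [Fin.ext_iff]
  constructor
  · simp only [invCount, ← filter_filter]
    rw [sum_card_filter_apply_lt_eq hinvW _ (fun p hp => (mem_filter.1 hp).2.ne) h01,
      ← univ_product_univ, card_product_filter_lt, card_univ, Fintype.card_fin]
  · simp only [desCount, ← filter_filter]
    have hne : ∀ p ∈ ({p : Fin n × Fin n | (p.1 : ℕ) + 1 = p.2} : Finset _), p.1 ≠ p.2 :=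
      fun p hp h => by simp [h] at hp
    rw [sum_card_filter_apply_lt_eq hinvW _ hne h01, Fin.card_filter_val_add_one_eq]
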